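/- arXiv:1904.00801 — 3 statements merged into one kernel-verified Lean document; each statement's English description precedes it below -/
import Mathlib

section
/- Let g₁ = 1, let p₁ be purely imaginary, let g₂ be a unit quaternion with imaginary part ḡ₂, and let p₂ satisfy ⟨p₂,g₂⟩ = 0. Then |p₁ + p₂g₂⁻¹|² - |p₁ + g₂⁻¹p₂|² = 4⟨p₁, ḡ₂ × p̄₂⟩, where p̄₂ is the imaginary part of p₂ and × is the cross product on Im ℍ ≅ ℝ³. -/
open Quaternion Matrix
open scoped RealInnerProductSpace

/-- The imaginary components of a quaternion, as a vector in ℝ³. -/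
def quatVec (q : ℍ) : Fin 3 → ℝ := ![q.imI, q.imJ, q.imK]

/-- With `g₁ = 1`, `p₁` purely imaginary, `g₂` a unit quaternion and `p₂ ⊥ g₂`:
`|p₁ + p₂g₂⁻¹|² - |p₁ + g₂⁻¹p₂|² = 4⟨p₁, ḡ₂ × p̄₂⟩`, where bars denote imaginary
parts and `×` is the cross product on `Im ℍ ≅ ℝ³`. -/
theorem momentum_norm_difference_cross (p₁ g₂ p₂ : ℍ)
    (hp₁ : p₁.re = 0) (hg₂ : ‖g₂‖ = 1) (hp₂ : ⟪p₂, g₂⟫ = 0) :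
    ‖p₁ + p₂ * g₂⁻¹‖ ^ 2 - ‖p₁ + g₂⁻¹ * p₂‖ ^ 2
      = 4 * (quatVec p₁ ⬝ᵥ crossProduct (quatVec g₂) (quatVec p₂)) := by
  have hg2 : Quaternion.normSq g₂ = 1 := by
    rw [Quaternion.normSq_eq_norm_mul_self, hg₂]; ring
  have hinv : g₂⁻¹ = star g₂ := by
    show (Quaternion.normSq g₂)⁻¹ • star g₂ = star g₂
    rw [hg2]; simp
  have h1 : ∀ q : ℍ, ‖q‖ ^ 2 = Quaternion.normSq q := fun q => by
    rw [Quaternion.normSq_eq_norm_mul_self, sq]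
  rw [hinv, h1, h1]
  have hp2 : p₂.re * g₂.re + p₂.imI * g₂.imI + p₂.imJ * g₂.imJ + p₂.imK * g₂.imK = 0 := by
    simpa [Quaternion.inner_def, Quaternion.re_mul] using hp₂
  have hg2' : g₂.re^2 + g₂.imI^2 + g₂.imJ^2 + g₂.imK^2 = 1 := by
    simpa [Quaternion.normSq_def'] using hg2
  simp only [Quaternion.normSq_def', Quaternion.re_add, Quaternion.imI_add,
    Quaternion.imJ_add, Quaternion.imK_add, Quaternion.re_mul, Quaternion.imI_mul,
    Quaternion.imJ_mul, Quaternion.imK_mul, Quaternion.re_star, Quaternion.imI_star,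
    Quaternion.imJ_star, Quaternion.imK_star, quatVec, crossProduct, hp₁]
  simp [dotProduct, Fin.sum_univ_three]
  ring
end

section
/- Let R₁, R₂ be purely imaginary quaternions and g_L = r + v a quaternion with real part r and imaginary part v. Writing k₁₁=|R₁|², k₁₂=⟨R₁,R₂⟩, k₂₂=|R₂|², k₁₃=⟨R₁,v⟩, k₂₃=⟨R₂,v⟩, k₃₃=|v|², δ=⟨R₁×R₂, v⟩, one has |R₁g_L + g_L R₂|² = (k₃₃+r²)(k₁₁+k₂₂) + 2k₁₂(r²-k₃₃) + 4k₁₃k₂₃ - 4rδ. -/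
open Quaternion Matrix
open scoped RealInnerProductSpace

/-- For purely imaginary quaternions `R₁, R₂` and a quaternion `g_L = r + v` with real
part `r` and imaginary part `v`, writing `k₁₁=|R₁|²`, `k₁₂=⟨R₁,R₂⟩`, `k₂₂=|R₂|²`,
`k₁₃=⟨R₁,v⟩`, `k₂₃=⟨R₂,v⟩`, `k₃₃=|v|²`, `δ=⟨R₁×R₂,v⟩`, one has
`|R₁g_L + g_L R₂|² = (k₃₃+r²)(k₁₁+k₂₂) + 2k₁₂(r²-k₃₃) + 4k₁₃k₂₃ - 4rδ`. -/
theorem casimir_C2_in_invariants (R₁ R₂ v : ℍ) (r : ℝ)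
    (h₁ : R₁.re = 0) (h₂ : R₂.re = 0) (hv : v.re = 0) :
    ‖R₁ * ((r : ℍ) + v) + ((r : ℍ) + v) * R₂‖ ^ 2
      = (‖v‖ ^ 2 + r ^ 2) * (‖R₁‖ ^ 2 + ‖R₂‖ ^ 2)
        + 2 * ⟪R₁, R₂⟫ * (r ^ 2 - ‖v‖ ^ 2)
        + 4 * ⟪R₁, v⟫ * ⟪R₂, v⟫
        - 4 * r * (crossProduct (quatVec R₁) (quatVec R₂) ⬝ᵥ quatVec v) := by
  have hn : ∀ q : ℍ, ‖q‖ ^ 2 = normSq q := fun q => by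
    rw [sq, ← Quaternion.normSq_eq_norm_mul_self]
  simp only [hn, Quaternion.inner_def, quatVec, crossProduct, Quaternion.normSq_def',
    Quaternion.re_mul, Quaternion.re_add, Quaternion.imI_add, Quaternion.imJ_add,
    Quaternion.imK_add, Quaternion.imI_mul, Quaternion.imJ_mul, Quaternion.imK_mul,
    Quaternion.re_coe, Quaternion.imI_coe, Quaternion.imJ_coe, Quaternion.imK_coe,
    Quaternion.re_star, Quaternion.imI_star, Quaternion.imJ_star, Quaternion.imK_star,
    h₁, h₂, hv, dotProduct, Fin.sum_univ_three, LinearMap.mk₂_apply,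
    Matrix.cons_val_zero, Matrix.cons_val_one, Matrix.head_cons, Matrix.cons_val_two,
    Matrix.tail_cons]
  ring
end

section
/- For θ = π/2, the system -(1/(m₁m₂))((1,1),(0,0))·(x₁,x₂)ᵀ = (2|η|, y(1/m₁ - 1/m₂)·1)ᵀ (obtained from the relative equilibrium linear system at θ=π/2) has a solution if and only if m₁ = m₂ = m, in which case (when y ≠ 0) the solution set is exactly the line x₁ + x₂ = -2m²|η|. -/
/-- At `θ = π/2` the relative-equilibrium linear system
`-(1/(m₁m₂))((1,1),(0,0))(x₁,x₂)ᵀ = (2|η|, y(1/m₁-1/m₂))ᵀ` (with `y ≠ 0`) has a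
solution if and only if `m₁ = m₂`, in which case the solution set is exactly the
line `x₁ + x₂ = -2m²|η|`. -/
theorem right_angled_relative_equilibria (m₁ m₂ y η : ℝ)
    (hm₁ : 0 < m₁) (hm₂ : 0 < m₂) (hy : y ≠ 0) :
    ((∃ x₁ x₂ : ℝ,
        -(1 / (m₁ * m₂)) * (x₁ + x₂) = 2 * η ∧
        -(1 / (m₁ * m₂)) * 0 = y * (1 / m₁ - 1 / m₂)) ↔ m₁ = m₂) ∧
    (m₁ = m₂ → ∀ x₁ x₂ : ℝ,
        (-(1 / (m₁ * m₂)) * (x₁ + x₂) = 2 * η ∧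
          -(1 / (m₁ * m₂)) * 0 = y * (1 / m₁ - 1 / m₂)) ↔
          x₁ + x₂ = -2 * m₁ ^ 2 * η) := by
  have hm₁' := hm₁.ne'
  have hm₂' := hm₂.ne'
  have key : (-(1 / (m₁ * m₂)) * 0 = y * (1 / m₁ - 1 / m₂)) ↔ m₁ = m₂ := by
    rw [mul_zero]
    constructor
    · intro h
      have h2 : (1 : ℝ) / m₁ - 1 / m₂ = 0 := by
        rcases mul_eq_zero.mp h.symm with h' | h'
        · exact absurd h' hy
        · exact h'
      have : (1:ℝ)/m₁ = 1/m₂ := by linarith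
      field_simp at this
      linarith
    · intro h; rw [h]; ring
  constructor
  · constructor
    · rintro ⟨x₁, x₂, _, h2⟩
      exact key.mp h2
    · intro h
      refine ⟨-2 * m₁ ^ 2 * η, 0, ?_, key.mpr h⟩
      subst h
      field_simp
      ring
  · intro h x₁ x₂
    subst h
    constructor
    · rintro ⟨h1, _⟩
      have hne : (m₁ * m₁ : ℝ) ≠ 0 := mul_ne_zero hm₁' hm₁'
      field_simp at h1
      nlinarith [h1]
    · intro h1
      refine ⟨?_, key.mpr rfl⟩
      rw [h1]
      field_simp
end
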